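/- Fix r > 0 and define G : (0,∞) → ℝ by G(a) = (1/(2r)) ∫_{−∞}^{a} exp(−(u² + 1)/(4r)) du + (1/(2r)) ∫_0^1 exp(−(a² + 2ax + 1)/(4r)) dx. Then G is differentiable on (0,∞) with derivative G′(a) = −exp(−(a² + 1)/(4r))/a² + exp(−(a + 1)²/(4r)) · (a² + a + 2r)/(2ra²). -/
import Mathlib


open MeasureTheory Set

/-- The F-functional of the capped half-cylinder at scale r, centered at the axis point at
distance a inside the cylinder from the cap center, as a one-dimensional integral. -/
noncomputable def G (r a : ℝ) : ℝ :=
  (1 / (2 * r)) * (∫ u in Set.Iic a, Real.exp (-(u ^ 2 + 1) / (4 * r))) +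
  (1 / (2 * r)) * ∫ x in (0:ℝ)..1, Real.exp (-(a ^ 2 + 2 * a * x + 1) / (4 * r))

lemma int_exp_mul (k : ℝ) (hk : k ≠ 0) :
    ∫ x in (0:ℝ)..1, Real.exp (k * x) = (Real.exp k - 1) / k := by
  have h : ∀ x ∈ Set.uIcc (0:ℝ) 1,
      HasDerivAt (fun x => Real.exp (k * x) / k) (Real.exp (k * x)) x := by
    intro x _
    have h2 := (((hasDerivAt_id x).const_mul k).exp).div_const k
    simpa [mul_comm, mul_div_assoc, mul_div_cancel_right₀, hk] using h2
  have hint : IntervalIntegrable (fun x => Real.exp (k * x)) volume 0 1 :=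
    (Real.continuous_exp.comp (continuous_const.mul continuous_id)).intervalIntegrable 0 1
  rw [intervalIntegral.integral_eq_sub_of_hasDerivAt h hint]
  simp [sub_div]

/-- G is differentiable on (0,∞) with the stated derivative. -/
theorem stmt_14 (r : ℝ) (hr : 0 < r) (a : ℝ) (ha : 0 < a) :
    HasDerivAt (G r)
      (-Real.exp (-(a ^ 2 + 1) / (4 * r)) / a ^ 2 +
        Real.exp (-((a + 1) ^ 2) / (4 * r)) * (a ^ 2 + a + 2 * r) / (2 * r * a ^ 2)) a := by
  have h4r : (0:ℝ) < 4 * r := by linarith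
  set g : ℝ → ℝ := fun u => Real.exp (-(u ^ 2 + 1) / (4 * r)) with hgdef
  have hgc : Continuous g := by
    apply Real.continuous_exp.comp
    exact ((continuous_pow 2).add continuous_const).neg.div_const _
  have hgint : Integrable g := by
    rw [hgdef]
    have harg : ∀ u : ℝ, -(u ^ 2 + 1) / (4 * r) = -(1 / (4 * r)) * u ^ 2 + -(1 / (4 * r)) :=
      fun u => by ring
    simp_rw [harg, Real.exp_add]
    exact (integrable_exp_neg_mul_sq (by positivity)).mul_const _
  set H : ℝ → ℝ := fun b =>
    (1 / (2 * r)) * ((∫ u in Set.Iic (0:ℝ), g u) + ∫ u in (0:ℝ)..b, g u) +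
      (Real.exp (-(b ^ 2 + 1) / (4 * r)) - Real.exp (-((b + 1) ^ 2) / (4 * r))) / b with hHdef
  have hGH : G r =ᶠ[nhds a] H := by
    filter_upwards [isOpen_Ioi.mem_nhds ha] with b hb
    have hb' : (0:ℝ) < b := hb
    have h1 : ∫ u in Set.Iic b, g u = (∫ u in Set.Iic (0:ℝ), g u) + ∫ u in (0:ℝ)..b, g u := by
      have hs := intervalIntegral.integral_Iic_sub_Iic (f := g) (μ := volume) (a := (0:ℝ))
        (b := b) hgint.integrableOn hgint.integrableOn
      linarith
    have h2 : ∫ x in (0:ℝ)..1, Real.exp (-(b ^ 2 + 2 * b * x + 1) / (4 * r)) =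
        Real.exp (-(b ^ 2 + 1) / (4 * r)) * ((Real.exp (-b / (2 * r)) - 1) / (-b / (2 * r))) := by
      have harg : ∀ x : ℝ, -(b ^ 2 + 2 * b * x + 1) / (4 * r) =
          -(b ^ 2 + 1) / (4 * r) + (-b / (2 * r)) * x := by
        intro x; field_simp; ring
      simp_rw [harg, Real.exp_add, intervalIntegral.integral_const_mul,
        int_exp_mul (-b / (2 * r)) (div_ne_zero (neg_ne_zero.mpr hb'.ne') (by positivity))]
    have h3 : Real.exp (-(b ^ 2 + 1) / (4 * r)) * Real.exp (-b / (2 * r)) =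
        Real.exp (-((b + 1) ^ 2) / (4 * r)) := by
      rw [← Real.exp_add]; congr 1; field_simp; ring
    show (1 / (2 * r)) * (∫ u in Set.Iic b, g u) +
        (1 / (2 * r)) * ∫ x in (0:ℝ)..1, Real.exp (-(b ^ 2 + 2 * b * x + 1) / (4 * r)) = H b
    rw [h1, h2, hHdef]
    have hbne : b ≠ 0 := hb'.ne'
    dsimp only
    rw [← h3]
    field_simp
    ring
  -- derivative of H
  have hD1 : HasDerivAt (fun b => ∫ u in (0:ℝ)..b, g u) (g a) a :=
    intervalIntegral.integral_hasDerivAt_right (hgc.intervalIntegrable 0 a)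
      hgc.aestronglyMeasurable.stronglyMeasurableAtFilter hgc.continuousAt
  have hE1 : HasDerivAt (fun b : ℝ => Real.exp (-(b ^ 2 + 1) / (4 * r)))
      (Real.exp (-(a ^ 2 + 1) / (4 * r)) * (-(2 * a ^ 1) / (4 * r))) a := by
    have := (((hasDerivAt_pow 2 a).add_const 1).neg.div_const (4 * r)).exp
    simpa using this
  have hE2 : HasDerivAt (fun b : ℝ => Real.exp (-((b + 1) ^ 2) / (4 * r)))
      (Real.exp (-((a + 1) ^ 2) / (4 * r)) * (-(2 * (a + 1) ^ 1 * 1) / (4 * r))) a := by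
    have := (((((hasDerivAt_id a).add_const 1).pow 2)).neg.div_const (4 * r)).exp
    simpa using this
  have hD2 : HasDerivAt (fun b => (Real.exp (-(b ^ 2 + 1) / (4 * r)) -
      Real.exp (-((b + 1) ^ 2) / (4 * r))) / b)
      (((Real.exp (-(a ^ 2 + 1) / (4 * r)) * (-(2 * a ^ 1) / (4 * r)) -
        Real.exp (-((a + 1) ^ 2) / (4 * r)) * (-(2 * (a + 1) ^ 1 * 1) / (4 * r))) * a -
        (Real.exp (-(a ^ 2 + 1) / (4 * r)) - Real.exp (-((a + 1) ^ 2) / (4 * r))) * 1) / a ^ 2) a :=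
    (hE1.sub hE2).div (hasDerivAt_id a) ha.ne'
  have hDH : HasDerivAt H ((1 / (2 * r)) * (0 + g a) +
      ((Real.exp (-(a ^ 2 + 1) / (4 * r)) * (-(2 * a ^ 1) / (4 * r)) -
        Real.exp (-((a + 1) ^ 2) / (4 * r)) * (-(2 * (a + 1) ^ 1 * 1) / (4 * r))) * a -
        (Real.exp (-(a ^ 2 + 1) / (4 * r)) - Real.exp (-((a + 1) ^ 2) / (4 * r))) * 1) / a ^ 2) a :=
    (((hasDerivAt_const a _).add hD1).const_mul _).add hD2
  have hval : (1 / (2 * r)) * (0 + g a) +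
      ((Real.exp (-(a ^ 2 + 1) / (4 * r)) * (-(2 * a ^ 1) / (4 * r)) -
        Real.exp (-((a + 1) ^ 2) / (4 * r)) * (-(2 * (a + 1) ^ 1 * 1) / (4 * r))) * a -
        (Real.exp (-(a ^ 2 + 1) / (4 * r)) - Real.exp (-((a + 1) ^ 2) / (4 * r))) * 1) / a ^ 2 =
      -Real.exp (-(a ^ 2 + 1) / (4 * r)) / a ^ 2 +
        Real.exp (-((a + 1) ^ 2) / (4 * r)) * (a ^ 2 + a + 2 * r) / (2 * r * a ^ 2) := by
    simp only [hgdef, pow_one, zero_add, mul_one]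
    field_simp
    ring
  exact (hval ▸ hDH).congr_of_eventuallyEq hGH
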